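/- arXiv:2412.03290 — 2 statements merged into one kernel-verified Lean document; each statement's English description precedes it below -/
import Mathlib

section
/- For complex parameters with Re(c) > Re(b) > 0 and |z| < 1, the Gauss hypergeometric function satisfies the Euler integral representation: ₂F₁(a,b;c|z) = Γ(c)/(Γ(b)Γ(c−b)) · ∫₀¹ u^{b−1}(1−u)^{c−b−1}(1−zu)^{−a} du. -/
open scoped Topology

/-- Pochhammer symbol `(p)_k` over `ℂ`. -/
noncomputable def pochC (p : ℂ) (k : ℕ) : ℂ := (ascPochhammer ℂ k).eval p

/-- Gauss hypergeometric series `₂F₁(a,b;c|z)`. -/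
noncomputable def hyp2F1 (a b c z : ℂ) : ℂ :=
  ∑' k : ℕ, pochC a k * pochC b k / (pochC c k * (k.factorial : ℂ)) * z ^ k

/-!
For `0 < u ≤ 1` the binomial series `(1 - zu)^(-a) = ∑ (a)_k / k! (zu)^k` converges absolutely,
uniformly in `u`, so it can be integrated termwise against the integrable Beta weight
`u^(b-1) (1-u)^(c-b-1)`. The `k`-th term gives `(a)_k / k! z^k B(b+k, c-b)`, and
`B(b+k, c-b) = (b)_k / (c)_k B(b, c-b)` by `ΓΓ = Γ B`, while `Γ(c) / (Γ(b) Γ(c-b)) = B(b, c-b)⁻¹`.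
-/

open Complex MeasureTheory

theorem hasSum_integral_mul_pow {α 𝕜 : Type*} [MeasurableSpace α] [RCLike 𝕜] {μ : Measure α}
    {f φ : α → 𝕜} {p : ℕ → 𝕜} (hf : Integrable f μ) (hφ : AEStronglyMeasurable φ μ)
    (hφ_le : ∀ᵐ x ∂μ, ‖φ x‖ ≤ 1) (hp : Summable fun k ↦ ‖p k‖) :
    HasSum (fun k ↦ p k * ∫ x, f x * φ x ^ k ∂μ) (∫ x, f x * ∑' k, p k * φ x ^ k ∂μ) := by
  have hpow_le (k : ℕ) : ∀ᵐ x ∂μ, ‖φ x ^ k‖ ≤ 1 :=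
    hφ_le.mono fun x hx ↦ by simpa only [norm_pow] using pow_le_one₀ (norm_nonneg _) hx
  have hint (k : ℕ) : Integrable (fun x ↦ p k * (f x * φ x ^ k)) μ :=
    (hf.mul_bdd (hφ.pow k) (hpow_le k)).const_mul (p k)
  have hnorm (k : ℕ) : ∫ x, ‖p k * (f x * φ x ^ k)‖ ∂μ ≤ ‖p k‖ * ∫ x, ‖f x‖ ∂μ := by
    rw [← integral_const_mul]
    refine integral_mono_ae (hint k).norm (hf.norm.const_mul _) ?_
    filter_upwards [hpow_le k] with x hx
    rw [norm_mul, norm_mul]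
    gcongr
    exact mul_le_of_le_one_right (norm_nonneg _) hx
  have hsum := hasSum_integral_of_summable_integral_norm hint <|
    (hp.mul_right _).of_nonneg_of_le (fun k ↦ integral_nonneg fun _ ↦ norm_nonneg _) hnorm
  have hpull (x : α) : f x * ∑' k, p k * φ x ^ k = ∑' k, p k * (f x * φ x ^ k) := by
    rw [← tsum_mul_left]
    exact tsum_congr fun k ↦ by ring
  simpa only [integral_const_mul, hpull] using hsum

theorem pochC_div_factorial_eq_choose (a : ℂ) (n : ℕ) :
    pochC a n / n.factorial = Ring.choose (a + n - 1) n := by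
  rw [← Ring.multichoose_eq, pochC, ← Polynomial.ascPochhammer_smeval_eq_eval,
    ← Ring.factorial_nsmul_multichoose_eq_ascPochhammer, nsmul_eq_mul, mul_div_cancel_left₀]
  exact_mod_cast n.factorial_ne_zero

theorem hasFPowerSeriesOnBall_one_sub_cpow_neg (a : ℂ) :
    HasFPowerSeriesOnBall (fun w ↦ (1 - w) ^ (-a))
      (.ofScalars ℂ fun n ↦ pochC a n / n.factorial) 0 1 := by
  simpa only [one_div, ← cpow_neg, ← pochC_div_factorial_eq_choose] using
    one_div_one_sub_cpow_hasFPowerSeriesOnBall_zero a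

theorem hasSum_pochC_div_factorial_mul_pow (a : ℂ) {w : ℂ} (hw : ‖w‖ < 1) :
    HasSum (fun n ↦ pochC a n / n.factorial * w ^ n) ((1 - w) ^ (-a)) := by
  simpa only [FormalMultilinearSeries.ofScalars_apply_eq, smul_eq_mul, zero_add] using
    (hasFPowerSeriesOnBall_one_sub_cpow_neg a).hasSum (y := w)
      (by rwa [Metric.mem_eball, edist_dist, dist_zero_right, ENNReal.ofReal_lt_one])

theorem summable_norm_pochC_div_factorial_mul_pow (a : ℂ) {w : ℂ} (hw : ‖w‖ < 1) :
    Summable fun n ↦ ‖pochC a n / n.factorial * w ^ n‖ := by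
  have := (FormalMultilinearSeries.ofScalars ℂ fun n ↦ pochC a n / n.factorial).summable_norm_apply
    (x := w) (Metric.eball_subset_eball (hasFPowerSeriesOnBall_one_sub_cpow_neg a).r_le
      (by rwa [Metric.mem_eball, edist_dist, dist_zero_right, ENNReal.ofReal_lt_one]))
  simpa only [FormalMultilinearSeries.ofScalars_apply_eq, smul_eq_mul] using this

theorem Complex.Gamma_add_nat_eq_pochC_mul {s : ℂ} (hs : 0 < s.re) (n : ℕ) :
    Gamma (s + n) = pochC s n * Gamma s := by
  refine (div_eq_iff (Gamma_ne_zero_of_re_pos hs)).1 (Gamma_add_nat_div_Gamma_eq s fun k h ↦ ?_)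
  have := congrArg re h
  simp only [neg_re, natCast_re] at this
  linarith [(k.cast_nonneg : (0 : ℝ) ≤ k)]

theorem Complex.betaIntegral_add_nat_left {s t : ℂ} (hs : 0 < s.re) (ht : 0 < t.re) (n : ℕ) :
    betaIntegral (s + n) t = pochC s n / pochC (s + t) n * betaIntegral s t := by
  have hsn : 0 < (s + n).re := by simp only [add_re, natCast_re]; positivity
  have hst : 0 < (s + t).re := by simp only [add_re]; positivity
  have h := Gamma_mul_Gamma_eq_betaIntegral hsn ht
  have hst_ne : pochC (s + t) n * Gamma (s + t) ≠ 0 := by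
    rw [← Gamma_add_nat_eq_pochC_mul hst]
    exact Gamma_ne_zero_of_re_pos (by simp only [add_re, natCast_re]; positivity)
  rw [Gamma_add_nat_eq_pochC_mul hs, add_right_comm, Gamma_add_nat_eq_pochC_mul hst, mul_assoc,
    Gamma_mul_Gamma_eq_betaIntegral hs ht] at h
  rw [div_mul_eq_mul_div, eq_div_iff (left_ne_zero_of_mul hst_ne)]
  exact mul_left_cancel₀ (right_ne_zero_of_mul hst_ne) (by linear_combination -h)

theorem Complex.betaIntegral_add_nat_left_eq_integral (s t : ℂ) (n : ℕ) :
    betaIntegral (s + n) t =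
      ∫ x in Set.Ioc (0 : ℝ) 1, (x : ℂ) ^ (s - 1) * (1 - (x : ℂ)) ^ (t - 1) * (x : ℂ) ^ n := by
  rw [betaIntegral, intervalIntegral.integral_of_le zero_le_one]
  refine setIntegral_congr_fun measurableSet_Ioc fun x hx ↦ ?_
  have hx0 : (x : ℂ) ≠ 0 := ofReal_ne_zero.2 hx.1.ne'
  rw [mul_right_comm, ← cpow_natCast, ← cpow_add _ _ hx0, add_sub_right_comm]

theorem Complex.Gamma_div_Gamma_mul_Gamma_sub {s u : ℂ} (hs : 0 < s.re) (hus : 0 < (u - s).re) :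
    Gamma u / (Gamma s * Gamma (u - s)) = (betaIntegral s (u - s))⁻¹ := by
  have hu : 0 < u.re := by simpa using add_pos hs hus
  rw [Gamma_mul_Gamma_eq_betaIntegral hs hus, add_sub_cancel,
    div_mul_cancel_left₀ (Gamma_ne_zero_of_re_pos hu)]

theorem Complex.betaIntegral_ne_zero {s t : ℂ} (hs : 0 < s.re) (ht : 0 < t.re) :
    betaIntegral s t ≠ 0 :=
  right_ne_zero_of_mul <| Gamma_mul_Gamma_eq_betaIntegral hs ht ▸
    mul_ne_zero (Gamma_ne_zero_of_re_pos hs) (Gamma_ne_zero_of_re_pos ht)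

theorem hyp2F1_term_eq_betaIntegral {b c : ℂ} (hb : 0 < b.re) (hcb : 0 < (c - b).re)
    (a z : ℂ) (k : ℕ) :
    pochC a k * pochC b k / (pochC c k * k.factorial) * z ^ k =
      (betaIntegral b (c - b))⁻¹ *
        (pochC a k / k.factorial * z ^ k * betaIntegral (b + k) (c - b)) := by
  have hB := betaIntegral_ne_zero hb hcb
  rw [betaIntegral_add_nat_left hb hcb, add_sub_cancel]
  field_simp

theorem euler_integral_repr_general (a b c z : ℂ)
    (hb : 0 < b.re) (hbc : b.re < c.re)
    (hz : ‖z‖ < 1) :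
    hyp2F1 a b c z =
      Complex.Gamma c / (Complex.Gamma b * Complex.Gamma (c - b)) *
        ∫ u in (0:ℝ)..1, (u : ℂ) ^ (b - 1) * ((1 : ℂ) - (u : ℂ)) ^ (c - b - 1) *
          ((1 : ℂ) - z * (u : ℂ)) ^ (-a) := by
  have hcb : 0 < (c - b).re := by rw [sub_re]; linarith
  have hu_le : ∀ᵐ u : ℝ ∂volume.restrict (Set.Ioc 0 1), ‖(u : ℂ)‖ ≤ 1 :=
    ae_restrict_of_forall_mem measurableSet_Ioc fun u hu ↦ by simpa [abs_of_pos hu.1] using hu.2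
  have hsum := hasSum_integral_mul_pow
    ((intervalIntegrable_iff_integrableOn_Ioc_of_le zero_le_one).1 (betaIntegral_convergent hb hcb))
    continuous_ofReal.aestronglyMeasurable hu_le (summable_norm_pochC_div_factorial_mul_pow a hz)
  have hbinom : ∀ u ∈ Set.Ioc (0 : ℝ) 1,
      ∑' k, pochC a k / k.factorial * z ^ k * (u : ℂ) ^ k = (1 - z * u) ^ (-a) := by
    intro u hu
    have hzu : ‖z * u‖ < 1 := by
      rw [norm_mul, norm_real, Real.norm_of_nonneg hu.1.le]
      nlinarith [norm_nonneg z, hu.2]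
    simp_rw [mul_assoc, ← mul_pow]
    exact (hasSum_pochC_div_factorial_mul_pow a hzu).tsum_eq
  rw [hyp2F1, tsum_congr (hyp2F1_term_eq_betaIntegral hb hcb a z), tsum_mul_left,
    Gamma_div_Gamma_mul_Gamma_sub hb hcb]
  simp_rw [betaIntegral_add_nat_left_eq_integral]
  rw [hsum.tsum_eq, intervalIntegral.integral_of_le zero_le_one]
  exact congrArg _ (setIntegral_congr_fun measurableSet_Ioc fun u hu ↦ by rw [hbinom u hu])

/-- Euler integral representation of the Gauss hypergeometric function. -/
theorem euler_integral_repr (a b c z : ℂ)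
    (hb : 0 < b.re) (hbc : b.re < c.re)
    (hc : ∀ n : ℕ, c ≠ -(n : ℂ))
    (hz : ‖z‖ < 1) :
    hyp2F1 a b c z =
      Complex.Gamma c / (Complex.Gamma b * Complex.Gamma (c - b)) *
        ∫ u in (0:ℝ)..1, (u : ℂ) ^ (b - 1) * ((1 : ℂ) - (u : ℂ)) ^ (c - b - 1) *
          ((1 : ℂ) - z * (u : ℂ)) ^ (-a) :=
  euler_integral_repr_general a b c z hb hbc hz
end

section
/- If Re(c − a − b) > 0 and c is not a nonpositive integer, then the Gauss hypergeometric series at unit argument satisfies ₂F₁(a,b;c|1) = Γ(c)Γ(c−a−b) / (Γ(c−a)Γ(c−b)). -/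
/-!
Gauss's argument. With `Γₙ` Euler's sequence `Complex.GammaSeq`, the coefficients `T k`
of the series satisfy `(n + 1) T (n + 1) = n ^ (a + b - c) Γₙ(c) / (Γₙ(a) Γₙ(b))`, hence
`(n + 1) T (n + 1) = O(n ^ (-Re (c - a - b)))`. This gives absolute convergence, and lets
`∑ c (k T k - (k + 1) T (k + 1))` telescope to `0`, which is the contiguous relation
`c (c - a - b) F(c) = (c - a) (c - b) F(c + 1)`. Iterating it and dividing each `(s)ₙ₊₁`
by `n ^ s n!` gives `F(c) / (Γₙ(c) Γₙ(c - a - b)) = F(c + n + 1) / (Γₙ(c - a) Γₙ(c - b))`.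
As `n → ∞`, `F(c + n + 1) → 1` by dominated convergence and `1 / Γₙ(s) → 1 / Γ(s)` for
every `s`.
-/

open Filter Finset Topology Asymptotics

lemma add_natCast_ne_neg_natCast {c : ℂ} (hc : ∀ m : ℕ, c ≠ -m) (n : ℕ) :
    ∀ m : ℕ, c + n ≠ -m := fun m h => hc (n + m) (by push_cast; linear_combination h)

lemma add_natCast_ne_zero {c : ℂ} (hc : ∀ m : ℕ, c ≠ -m) (m : ℕ) : c + m ≠ 0 :=
  fun h => hc m (by linear_combination h)

lemma ne_neg_natCast_of_re_pos {s : ℂ} (hs : 0 < s.re) (m : ℕ) : s ≠ -m := by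
  rintro rfl
  simp only [Complex.neg_re, Complex.natCast_re, Left.neg_pos_iff] at hs
  exact (Nat.cast_nonneg m).not_gt hs

lemma pochC_zero (p : ℂ) : pochC p 0 = 1 := by simp [pochC]

lemma pochC_succ (p : ℂ) (k : ℕ) : pochC p (k + 1) = pochC p k * (p + k) :=
  ascPochhammer_succ_eval k p

lemma pochC_eq_prod (p : ℂ) (k : ℕ) : pochC p k = ∏ j ∈ range k, (p + j) := by
  induction k with
  | zero => simp [pochC_zero]
  | succ k ih => rw [pochC_succ, ih, prod_range_succ]

lemma pochC_ne_zero {p : ℂ} (hp : ∀ m : ℕ, p ≠ -m) (k : ℕ) : pochC p k ≠ 0 := by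
  rw [pochC, Ne, ascPochhammer_eval_eq_zero_iff]
  rintro ⟨m, -, hm⟩
  exact hp m (by rw [hm, neg_neg])

lemma pochC_neg_natCast_of_lt {m k : ℕ} (h : m < k) : pochC (-m) k = 0 :=
  ascPochhammer_eval_neg_coe_nat_of_lt h

lemma norm_pochC_le {p q : ℂ} (h : ∀ j : ℕ, ‖p + j‖ ≤ ‖q + j‖) (k : ℕ) :
    ‖pochC p k‖ ≤ ‖pochC q k‖ := by
  simp only [pochC_eq_prod, norm_prod]
  exact prod_le_prod (fun _ _ => norm_nonneg _) fun j _ => h j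

lemma inv_GammaSeq (s : ℂ) (n : ℕ) :
    (Complex.GammaSeq s n)⁻¹ = pochC s (n + 1) / ((n : ℂ) ^ s * n.factorial) := by
  rw [Complex.GammaSeq, pochC_eq_prod, inv_div]

-- At a pole `s = -m` both sides are `0`: `Γₙ(-m) = 0` for `n ≥ m` (a division by zero),
-- and `Γ(-m) = 0`.
lemma tendsto_inv_GammaSeq (s : ℂ) :
    Tendsto (fun n => (Complex.GammaSeq s n)⁻¹) atTop (𝓝 (Complex.Gamma s)⁻¹) := by
  by_cases hs : ∀ m : ℕ, s ≠ -m
  · exact (Complex.GammaSeq_tendsto_Gamma s).inv₀ (Complex.Gamma_ne_zero hs)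
  obtain ⟨m, rfl⟩ : ∃ m : ℕ, s = -m := by simpa using hs
  rw [Complex.Gamma_neg_nat_eq_zero, inv_zero]
  refine tendsto_const_nhds.congr' ?_
  filter_upwards [eventually_ge_atTop m] with n hn
  rw [inv_GammaSeq, pochC_neg_natCast_of_lt (by omega), zero_div]

noncomputable def hyp2F1Coeff (a b c : ℂ) (k : ℕ) : ℂ :=
  pochC a k * pochC b k / (pochC c k * (k.factorial : ℂ))

lemma hyp2F1_one_eq_tsum (a b c : ℂ) : hyp2F1 a b c 1 = ∑' k, hyp2F1Coeff a b c k := by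
  simp [hyp2F1, hyp2F1Coeff]

section Coeff

variable {a b c : ℂ}

lemma hyp2F1Coeff_succ (hc : ∀ m : ℕ, c ≠ -m) (k : ℕ) :
    (c + k) * (k + 1) * hyp2F1Coeff a b c (k + 1) = (a + k) * (b + k) * hyp2F1Coeff a b c k := by
  have hpoch := pochC_ne_zero hc k
  have hck := add_natCast_ne_zero hc k
  simp only [hyp2F1Coeff, pochC_succ, Nat.factorial_succ, Nat.cast_mul, Nat.cast_succ]
  field_simp

lemma hyp2F1Coeff_lower_add_one (hc : ∀ m : ℕ, c ≠ -m) (k : ℕ) :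
    (c + k) * hyp2F1Coeff a b (c + 1) k = c * hyp2F1Coeff a b c k := by
  have hc1 : ∀ m : ℕ, c + 1 ≠ -m := by exact_mod_cast add_natCast_ne_neg_natCast hc 1
  have hpoch := pochC_ne_zero hc k
  have hpoch1 := pochC_ne_zero hc1 k
  have hfact : (k.factorial : ℂ) ≠ 0 := Nat.cast_ne_zero.mpr k.factorial_ne_zero
  have hshift : c * pochC (c + 1) k = pochC c k * (c + k) := by
    rw [← pochC_succ, pochC, pochC, ascPochhammer_succ_left]
    simp [Polynomial.eval_comp]
  simp only [hyp2F1Coeff]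
  field_simp
  linear_combination -(pochC a k * pochC b k) * hshift

lemma hyp2F1Coeff_contiguous (hc : ∀ m : ℕ, c ≠ -m) (k : ℕ) :
    c * (c - a - b) * hyp2F1Coeff a b c k - (c - a) * (c - b) * hyp2F1Coeff a b (c + 1) k =
      c * (k * hyp2F1Coeff a b c k - ((k + 1 : ℕ) : ℂ) * hyp2F1Coeff a b c (k + 1)) := by
  apply mul_left_cancel₀ (add_natCast_ne_zero hc k)
  push_cast
  linear_combination -((c - a) * (c - b)) * hyp2F1Coeff_lower_add_one (a := a) (b := b) hc k +
    c * hyp2F1Coeff_succ (a := a) (b := b) hc k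

end Coeff

section Asymptotics

variable {a b c : ℂ}

lemma succ_mul_hyp2F1Coeff_succ (hc : ∀ m : ℕ, c ≠ -m) {n : ℕ} (hn : n ≠ 0) :
    ((n : ℂ) + 1) * hyp2F1Coeff a b c (n + 1) = (n : ℂ) ^ (a + b - c) *
      ((Complex.GammaSeq a n)⁻¹ * (Complex.GammaSeq b n)⁻¹ / (Complex.GammaSeq c n)⁻¹) := by
  have hn' : (n : ℂ) ≠ 0 := Nat.cast_ne_zero.mpr hn
  have hpow : (n : ℂ) ^ (a + b - c) * (n : ℂ) ^ c = (n : ℂ) ^ a * (n : ℂ) ^ b := by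
    rw [← Complex.cpow_add _ _ hn', ← Complex.cpow_add _ _ hn', sub_add_cancel]
  have hpow_ne : ∀ s : ℂ, (n : ℂ) ^ s ≠ 0 := fun s => by simp [Complex.cpow_eq_zero_iff, hn]
  have hpoch := pochC_ne_zero hc (n + 1)
  have hpowc := hpow_ne c
  have hfact : (n.factorial : ℂ) ≠ 0 := Nat.cast_ne_zero.mpr n.factorial_ne_zero
  simp only [inv_GammaSeq, hyp2F1Coeff, Nat.factorial_succ, Nat.cast_mul, Nat.cast_succ]
  field_simp
  rw [mul_assoc (_ * _), hpow, mul_div_cancel_right₀ _ (mul_ne_zero (hpow_ne a) (hpow_ne b))]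

lemma isBigO_succ_mul_hyp2F1Coeff_succ (hc : ∀ m : ℕ, c ≠ -m) :
    (fun n : ℕ => ((n : ℂ) + 1) * hyp2F1Coeff a b c (n + 1)) =O[atTop]
      fun n : ℕ => (n : ℝ) ^ (-(c - a - b).re) := by
  have hpow : (fun n : ℕ => (n : ℂ) ^ (a + b - c)) =O[atTop]
      fun n : ℕ => (n : ℝ) ^ (-(c - a - b).re) := by
    refine isBigO_norm_left.mp (EventuallyEq.isBigO ?_)
    filter_upwards [eventually_gt_atTop 0] with n hn
    rw [Complex.norm_natCast_cpow_of_pos hn]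
    congr 1
    simp only [Complex.sub_re, Complex.add_re]
    ring
  have hratio := ((tendsto_inv_GammaSeq a).mul (tendsto_inv_GammaSeq b)).div
    (tendsto_inv_GammaSeq c) (inv_ne_zero (Complex.Gamma_ne_zero hc))
  refine (hpow.mul (hratio.isBigO_one ℝ)).congr' ?_ (by simp)
  filter_upwards [eventually_ne_atTop 0] with n hn
  exact (succ_mul_hyp2F1Coeff_succ hc hn).symm

lemma tendsto_natCast_mul_hyp2F1Coeff (hconv : 0 < (c - a - b).re) (hc : ∀ m : ℕ, c ≠ -m) :
    Tendsto (fun k : ℕ => (k : ℂ) * hyp2F1Coeff a b c k) atTop (𝓝 0) := by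
  have hdecay : Tendsto (fun n : ℕ => (n : ℝ) ^ (-(c - a - b).re)) atTop (𝓝 0) :=
    (tendsto_rpow_neg_atTop hconv).comp tendsto_natCast_atTop_atTop
  rw [← tendsto_add_atTop_iff_nat 1]
  simpa using (isBigO_succ_mul_hyp2F1Coeff_succ hc).trans_tendsto hdecay

lemma summable_norm_hyp2F1Coeff (hconv : 0 < (c - a - b).re) (hc : ∀ m : ℕ, c ≠ -m) :
    Summable fun k : ℕ => ‖hyp2F1Coeff a b c k‖ := by
  have hinv : (fun n : ℕ => ((n : ℂ) + 1)⁻¹) =O[atTop] fun n : ℕ => (n : ℝ) ^ (-1 : ℝ) := by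
    refine IsBigO.of_bound 1 ?_
    filter_upwards [eventually_gt_atTop 0] with n hn
    rw [Real.rpow_neg_one, one_mul, norm_inv, norm_inv, ← Nat.cast_succ, Complex.norm_natCast,
      Real.norm_natCast]
    gcongr
    exact n.le_succ
  have hbound := (hinv.mul (isBigO_succ_mul_hyp2F1Coeff_succ (a := a) (b := b) hc)).congr'
    (Eventually.of_forall fun n => inv_mul_cancel_left₀ (Nat.cast_add_one_ne_zero n) _)
    ((eventually_gt_atTop 0).mono fun n hn => (Real.rpow_add (Nat.cast_pos.mpr hn) _ _).symm)
  refine (summable_nat_add_iff 1).mp (summable_of_isBigO_nat ?_ hbound.norm_left)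
  exact Real.summable_nat_rpow.mpr (by linarith)

end Asymptotics

lemma tsum_eq_sub_of_telescoping {G : Type*} [TopologicalSpace G] [AddCommGroup G]
    [IsTopologicalAddGroup G] [T2Space G] {f t : ℕ → G} {l : G} (hf : Summable f)
    (hft : ∀ k, f k = t k - t (k + 1)) (ht : Tendsto t atTop (𝓝 l)) :
    ∑' k, f k = t 0 - l := by
  refine tendsto_nhds_unique hf.hasSum.tendsto_sum_nat ?_
  simp_rw [hft, sum_range_sub']
  exact tendsto_const_nhds.sub ht

section Contiguity

variable {a b c : ℂ}

lemma hyp2F1_one_contiguous (hconv : 0 < (c - a - b).re) (hc : ∀ m : ℕ, c ≠ -m) :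
    c * (c - a - b) * hyp2F1 a b c 1 = (c - a) * (c - b) * hyp2F1 a b (c + 1) 1 := by
  have hconv1 : 0 < (c + 1 - a - b).re := by
    simpa [add_sub_right_comm] using hconv.trans (lt_add_one _)
  have hc1 : ∀ m : ℕ, c + 1 ≠ -m := by exact_mod_cast add_natCast_ne_neg_natCast hc 1
  have hsum := (summable_norm_hyp2F1Coeff hconv hc).of_norm.mul_left (c * (c - a - b))
  have hsum1 := (summable_norm_hyp2F1Coeff hconv1 hc1).of_norm.mul_left ((c - a) * (c - b))
  have htel := tsum_eq_sub_of_telescoping (hsum.sub hsum1)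
    (fun k => by rw [hyp2F1Coeff_contiguous hc k, mul_sub])
    ((tendsto_natCast_mul_hyp2F1Coeff hconv hc).const_mul c)
  rw [hsum.tsum_sub hsum1, tsum_mul_left, tsum_mul_left] at htel
  simp only [hyp2F1_one_eq_tsum]
  linear_combination htel

lemma pochC_mul_pochC_mul_hyp2F1_one (hconv : 0 < (c - a - b).re) (hc : ∀ m : ℕ, c ≠ -m)
    (n : ℕ) : pochC c n * pochC (c - a - b) n * hyp2F1 a b c 1 =
      pochC (c - a) n * pochC (c - b) n * hyp2F1 a b (c + n) 1 := by
  induction n with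
  | zero => simp [pochC_zero]
  | succ n ih =>
    have hconvn : 0 < (c + n - a - b).re := by
      simpa [add_sub_right_comm] using add_pos_of_pos_of_nonneg hconv (Nat.cast_nonneg n)
    have hcontig := hyp2F1_one_contiguous hconvn (add_natCast_ne_neg_natCast hc n)
    simp only [pochC_succ, Nat.cast_succ, ← add_assoc]
    linear_combination
      (c + n) * (c - a - b + n) * ih + pochC (c - a) n * pochC (c - b) n * hcontig

lemma inv_GammaSeq_mul_hyp2F1_one (hconv : 0 < (c - a - b).re) (hc : ∀ m : ℕ, c ≠ -m)
    {n : ℕ} (hn : n ≠ 0) :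
    (Complex.GammaSeq c n)⁻¹ * (Complex.GammaSeq (c - a - b) n)⁻¹ * hyp2F1 a b c 1 =
      (Complex.GammaSeq (c - a) n)⁻¹ * (Complex.GammaSeq (c - b) n)⁻¹ *
        hyp2F1 a b (c + (n + 1 : ℕ)) 1 := by
  have hn' : (n : ℂ) ≠ 0 := Nat.cast_ne_zero.mpr hn
  have hpow :
      (n : ℂ) ^ c * (n : ℂ) ^ (c - a - b) = (n : ℂ) ^ (c - a) * (n : ℂ) ^ (c - b) := by
    rw [← Complex.cpow_add _ _ hn', ← Complex.cpow_add _ _ hn']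
    ring_nf
  simp only [inv_GammaSeq]
  calc _ = pochC c (n + 1) * pochC (c - a - b) (n + 1) * hyp2F1 a b c 1 /
        ((n : ℂ) ^ c * (n : ℂ) ^ (c - a - b) * (n.factorial : ℂ) ^ 2) := by ring
    _ = pochC (c - a) (n + 1) * pochC (c - b) (n + 1) * hyp2F1 a b (c + (n + 1 : ℕ)) 1 /
        ((n : ℂ) ^ (c - a) * (n : ℂ) ^ (c - b) * (n.factorial : ℂ) ^ 2) := by
      rw [pochC_mul_pochC_mul_hyp2F1_one hconv hc, hpow]
    _ = _ := by ring

end Contiguity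

lemma norm_ofReal_add_natCast {x : ℝ} (hx : 0 ≤ x) (j : ℕ) : ‖(x : ℂ) + j‖ = x + j := by
  rw [← Complex.ofReal_natCast, ← Complex.ofReal_add, Complex.norm_real, Real.norm_of_nonneg]
  positivity

lemma norm_hyp2F1Coeff_le {a b c a' b' c' : ℂ} (ha : ∀ j : ℕ, ‖a + j‖ ≤ ‖a' + j‖)
    (hb : ∀ j : ℕ, ‖b + j‖ ≤ ‖b' + j‖) (hc : ∀ j : ℕ, ‖c' + j‖ ≤ ‖c + j‖)
    (hc' : ∀ m : ℕ, c' ≠ -m) (k : ℕ) :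
    ‖hyp2F1Coeff a b c k‖ ≤ ‖hyp2F1Coeff a' b' c' k‖ := by
  simp only [hyp2F1Coeff, norm_div, norm_mul]
  have hfact : 0 < ‖(k.factorial : ℂ)‖ :=
    norm_pos_iff.mpr (Nat.cast_ne_zero.mpr k.factorial_ne_zero)
  refine div_le_div₀ (by positivity)
    (mul_le_mul (norm_pochC_le ha k) (norm_pochC_le hb k) (norm_nonneg _) (norm_nonneg _))
    (mul_pos (norm_pos_iff.mpr (pochC_ne_zero hc' k)) hfact)
    (mul_le_mul_of_nonneg_right (norm_pochC_le hc k) hfact.le)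

lemma tendsto_hyp2F1Coeff_lower_add_natCast (a b c : ℂ) (k : ℕ) :
    Tendsto (fun n : ℕ => hyp2F1Coeff a b (c + n) k) atTop (𝓝 (if k = 0 then 1 else 0)) := by
  rcases k with _ | k
  · simp [hyp2F1Coeff, pochC_zero]
  have hfactor (j : ℕ) : Tendsto (fun n : ℕ => (c + n + j)⁻¹) atTop (𝓝 0) := by
    refine (tendsto_inv₀_cobounded.comp ((tendsto_add_const_cobounded (c + j)).comp
      tendsto_natCast_atTop_cobounded)).congr fun n => ?_
    simp only [Function.comp_apply]
    ring
  have hinv : Tendsto (fun n : ℕ => (pochC (c + n) (k + 1))⁻¹) atTop (𝓝 0) := by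
    simp only [pochC_eq_prod, ← prod_inv_distrib]
    simpa [prod_range_succ] using tendsto_finsetProd (range (k + 1)) fun j _ => hfactor j
  have := hinv.const_mul (pochC a (k + 1) * pochC b (k + 1) / ((k + 1).factorial : ℂ))
  rw [mul_zero] at this
  rw [if_neg k.succ_ne_zero]
  exact this.congr fun n => by rw [hyp2F1Coeff]; ring

lemma tendsto_hyp2F1_one_lower_add_natCast (a b c : ℂ) :
    Tendsto (fun n : ℕ => hyp2F1 a b (c + n) 1) atTop (𝓝 1) := by
  set d : ℝ := ‖a‖ + ‖b‖ + 1
  have hd : ∀ m : ℕ, (d : ℂ) ≠ -m :=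
    ne_neg_natCast_of_re_pos (by simp only [Complex.ofReal_re]; positivity)
  have hsum : Summable fun k => ‖hyp2F1Coeff ‖a‖ ‖b‖ d k‖ :=
    summable_norm_hyp2F1Coeff (by simp [d]; linarith) hd
  have hbound : ∀ᶠ n : ℕ in atTop, ∀ k,
      ‖hyp2F1Coeff a b (c + n) k‖ ≤ ‖hyp2F1Coeff ‖a‖ ‖b‖ d k‖ := by
    filter_upwards [eventually_ge_atTop ⌈‖c‖ + d⌉₊] with n hn k
    have hn' : ‖c‖ + d ≤ n := Nat.ceil_le.mp hn
    refine norm_hyp2F1Coeff_le (fun j => ?_) (fun j => ?_) (fun j => ?_) hd k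
    · rw [norm_ofReal_add_natCast (norm_nonneg a)]
      simpa using norm_add_le a j
    · rw [norm_ofReal_add_natCast (norm_nonneg b)]
      simpa using norm_add_le b j
    · rw [norm_ofReal_add_natCast (by positivity)]
      have hsub := norm_sub_le (c + n + j) c
      rw [show c + n + j - c = ((n + j : ℕ) : ℂ) by push_cast; ring,
        Complex.norm_natCast] at hsub
      push_cast at hsub
      linarith
  simp only [hyp2F1_one_eq_tsum]
  simpa using tendsto_tsum_of_dominated_convergence hsum
    (tendsto_hyp2F1Coeff_lower_add_natCast a b c) hbound

theorem gauss_at_one_general (a b c : ℂ)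
    (hconv : 0 < (c - a - b).re)
    (hc : ∀ n : ℕ, c ≠ -(n : ℂ)) :
    hyp2F1 a b c 1 =
      Complex.Gamma c * Complex.Gamma (c - a - b) /
        (Complex.Gamma (c - a) * Complex.Gamma (c - b)) := by
  have hΓc := Complex.Gamma_ne_zero hc
  have hΓcab := Complex.Gamma_ne_zero (ne_neg_natCast_of_re_pos hconv)
  have hlhs := ((tendsto_inv_GammaSeq c).mul (tendsto_inv_GammaSeq (c - a - b))).mul_const
    (hyp2F1 a b c 1)
  have hrhs := ((tendsto_inv_GammaSeq (c - a)).mul (tendsto_inv_GammaSeq (c - b))).mul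
    ((tendsto_hyp2F1_one_lower_add_natCast a b c).comp (tendsto_add_atTop_nat 1))
  have hlim : (Complex.Gamma c)⁻¹ * (Complex.Gamma (c - a - b))⁻¹ * hyp2F1 a b c 1 =
      (Complex.Gamma (c - a))⁻¹ * (Complex.Gamma (c - b))⁻¹ * 1 :=
    tendsto_nhds_unique hlhs <| hrhs.congr' <| (eventually_ne_atTop 0).mono fun n hn =>
      (inv_GammaSeq_mul_hyp2F1_one hconv hc hn).symm
  rw [div_eq_mul_inv, mul_inv, ← mul_one (_ * (Complex.Gamma (c - b))⁻¹), ← hlim]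
  field_simp

/-- Gauss's theorem: the hypergeometric series at unit argument. -/
theorem gauss_at_one (a b c : ℂ)
    (hconv : 0 < (c - a - b).re)
    (hc : ∀ n : ℕ, c ≠ -(n : ℂ))
    (hca : ∀ n : ℕ, c - a ≠ -(n : ℂ))
    (hcb : ∀ n : ℕ, c - b ≠ -(n : ℂ)) :
    hyp2F1 a b c 1 =
      Complex.Gamma c * Complex.Gamma (c - a - b) /
        (Complex.Gamma (c - a) * Complex.Gamma (c - b)) :=
  gauss_at_one_general a b c hconv hc
end
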